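/- Let C ⊆ Σ^M be a code with relative distance δ and suppose G is a (K, δ/2)-disperser with N left vertices and uniform left degree D. In the erasure-based unique decoding process for G(C): each iteration that replaces values at a pair of left vertices u, v by ⊥ (because they send inconsistent values to a common right vertex) erases at least one erroneous left vertex. Hence if the received word y agrees with G(c) except for e errors and s erasures with 2e + s < N − K, then after the process terminates at least K left vertices still hold their correct (non-erased) values, and consequently at least a (1 − δ/2) fraction of right vertices receive at least one correct symbol. -/

import Mathlib

/-!
If two non-erased left vertices send different symbols to a common right vertex, they cannot
both hold their values in `G(c)`, so every erasure step removes at least one error while creating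
at most two erasures: the potential `2e + s` never increases. Since `2e + s < N - K` initially,
at every later stage fewer than `N - K` vertices are erroneous or erased, so at least `K` hold
their correct value, and the disperser property spreads these over a `(1 - δ/2)` fraction of the
right vertices.
-/

/-- One iteration of the erasure-based unique decoding process: two left vertices `u, v`
holding non-`⊥` values that send inconsistent values to a common right vertex are both
replaced by `⊥`. -/
def EraseStep {V R A : Type*} {D : ℕ} (Γ : V → Fin D → R) [DecidableEq V]
    (y y' : V → Option (Fin D → A)) : Prop :=
  ∃ (u v : V) (a b : Fin D → A) (i j : Fin D),
    y u = some a ∧ y v = some b ∧ Γ u i = Γ v j ∧ a i ≠ b j ∧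
    y' = Function.update (Function.update y u none) v none

open Finset Function

namespace ErasureDecoding

variable {V β R A : Type*} {D : ℕ} {Γ : V → Fin D → R} {c : R → A}

/-- The graph-concatenated codeword `G(c)`. -/
def graphConcat (Γ : V → Fin D → R) (c : R → A) : V → Fin D → A :=
  fun u i => c (Γ u i)

theorem ne_graphConcat_or_ne_graphConcat {u v : V} {a b : Fin D → A} {i j : Fin D}
    (hΓ : Γ u i = Γ v j) (hab : a i ≠ b j) :
    a ≠ graphConcat Γ c u ∨ b ≠ graphConcat Γ c v := by
  by_contra! h
  exact hab (by rw [h.1, h.2, graphConcat, graphConcat, hΓ])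

variable [Fintype V]

open Classical in
noncomputable def errors (x : V → β) (y : V → Option β) : Finset V :=
  univ.filter fun u => ∃ a, y u = some a ∧ a ≠ x u

def erasures (y : V → Option β) : Finset V :=
  univ.filter fun u => y u = none

def agreements [DecidableEq β] (x : V → β) (y : V → Option β) : Finset V :=
  univ.filter fun u => y u = some (x u)

open Classical in
theorem biUnion_image_agreements_subset [Fintype R] [DecidableEq β] (Γ : V → Fin D → R)
    (x : V → β) (y : V → Option β) :
    (agreements x y).biUnion (fun v => univ.image (Γ v)) ⊆
      univ.filter fun w => ∃ u i, Γ u i = w ∧ y u = some (x u) := by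
  intro w hw
  simp only [agreements, mem_biUnion, mem_image, mem_filter, mem_univ, true_and] at hw ⊢
  obtain ⟨u, hu, i, rfl⟩ := hw
  exact ⟨u, i, rfl, hu⟩

variable [DecidableEq V]

theorem univ_subset_agreements_union [DecidableEq β] (x : V → β) (y : V → Option β) :
    univ ⊆ agreements x y ∪ errors x y ∪ erasures y := by
  intro u _
  simp only [agreements, errors, erasures, mem_union, mem_filter, mem_univ, true_and]
  cases y u with
  | none => exact Or.inr rfl
  | some a => by_cases h : a = x u <;> simp [h]

theorem card_le_card_agreements_add [DecidableEq β] (x : V → β) (y : V → Option β) :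
    Fintype.card V ≤ #(agreements x y) + #(errors x y) + #(erasures y) :=
  calc Fintype.card V = #(univ : Finset V) := card_univ.symm
    _ ≤ #(agreements x y ∪ errors x y ∪ erasures y) :=
        card_le_card (univ_subset_agreements_union x y)
    _ ≤ _ := (card_union_le _ _).trans (by gcongr; exact card_union_le _ _)

theorem erasures_update_update_subset (y : V → Option β) (u v : V) :
    erasures (update (update y u none) v none) ⊆ insert u (insert v (erasures y)) := by
  intro w hw
  simp only [erasures, mem_filter, mem_univ, true_and, mem_insert] at hw ⊢
  by_cases hwu : w = u
  · exact Or.inl hwu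
  by_cases hwv : w = v
  · exact Or.inr (Or.inl hwv)
  rw [update_of_ne hwv, update_of_ne hwu] at hw
  exact Or.inr (Or.inr hw)

theorem errors_update_update_subset (x : V → β) (y : V → Option β) (u v : V) :
    errors x (update (update y u none) v none) ⊆ ((errors x y).erase u).erase v := by
  intro w hw
  simp only [errors, mem_filter, mem_univ, true_and] at hw
  obtain ⟨a, ha, hax⟩ := hw
  have hwv : w ≠ v := by rintro rfl; simp at ha
  have hwu : w ≠ u := by rintro rfl; simp [update_of_ne hwv] at ha
  rw [update_of_ne hwv, update_of_ne hwu] at ha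
  simp only [errors, mem_erase, mem_filter, mem_univ, true_and]
  exact ⟨hwv, hwu, a, ha, hax⟩

theorem potential_update_update_le (x : V → β) (y : V → Option β) {u v : V}
    (hbad : u ∈ errors x y ∨ v ∈ errors x y) :
    2 * #(errors x (update (update y u none) v none)) + #(erasures (update (update y u none) v none))
      ≤ 2 * #(errors x y) + #(erasures y) := by
  have hs : #(erasures (update (update y u none) v none)) ≤ #(erasures y) + 2 :=
    calc _ ≤ #(insert u (insert v (erasures y))) :=
          card_le_card (erasures_update_update_subset y u v)
      _ ≤ #(erasures y) + 2 :=
          (card_insert_le _ _).trans (Nat.succ_le_succ (card_insert_le _ _))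
  have he : #(errors x (update (update y u none) v none)) < #(errors x y) := by
    refine (card_le_card (errors_update_update_subset x y u v)).trans_lt ?_
    rcases hbad with h | h
    · exact card_erase_le.trans_lt (card_erase_lt_of_mem h)
    · rw [erase_right_comm]
      exact card_erase_le.trans_lt (card_erase_lt_of_mem h)
  omega

theorem potential_le_of_eraseStep {y y' : V → Option (Fin D → A)} (h : EraseStep Γ y y') :
    2 * #(errors (graphConcat Γ c) y') + #(erasures y')
      ≤ 2 * #(errors (graphConcat Γ c) y) + #(erasures y) := by
  obtain ⟨u, v, a, b, i, j, hu, hv, hΓ, hab, rfl⟩ := h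
  refine potential_update_update_le _ y ?_
  simp only [errors, mem_filter, mem_univ, true_and]
  exact (ne_graphConcat_or_ne_graphConcat hΓ hab).imp (⟨a, hu, ·⟩) (⟨b, hv, ·⟩)

theorem potential_le_of_reflTransGen {y y' : V → Option (Fin D → A)}
    (h : Relation.ReflTransGen (EraseStep Γ) y y') :
    2 * #(errors (graphConcat Γ c) y') + #(erasures y')
      ≤ 2 * #(errors (graphConcat Γ c) y) + #(erasures y) := by
  induction h with
  | refl => exact le_rfl
  | tail _ hstep ih => exact (potential_le_of_eraseStep hstep).trans ih

end ErasureDecoding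

open ErasureDecoding

open Classical in
/-- Correctness of the erasure process: each step erases at least one erroneous left
vertex, and if the received word has `e` errors and `s` erasures with `2e + s < N - K`
(where `Γ` is a `(K, δ/2)`-disperser), then after any sequence of steps at least `K` left
vertices still hold their correct values, so at least a `(1 - δ/2)` fraction of right
vertices receive a correct symbol. -/
theorem stmt_16 {V R A : Type*} [Fintype V] [Fintype R] [DecidableEq V] {D : ℕ}
    (Γ : V → Fin D → R) (K : ℕ) (δ : ℝ)
    (hG : ∀ S : Finset V, K ≤ S.card →
      (1 - δ / 2) * (Fintype.card R) ≤
        ((S.biUnion (fun v => Finset.image (Γ v) Finset.univ)).card : ℝ))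
    (c : R → A)
    (y₀ : V → Option (Fin D → A)) (e s : ℕ)
    (he : e = (Finset.univ.filter
      (fun u : V => ∃ a, y₀ u = some a ∧ a ≠ fun i => c (Γ u i))).card)
    (hs : s = (Finset.univ.filter (fun u : V => y₀ u = none)).card)
    (hbound : (2 * e + s : ℝ) < (Fintype.card V : ℝ) - K) :
    (∀ (y : V → Option (Fin D → A)) (u v : V) (a b : Fin D → A) (i j : Fin D),
      y u = some a → y v = some b → Γ u i = Γ v j → a i ≠ b j →
      (a ≠ fun i' => c (Γ u i')) ∨ (b ≠ fun i' => c (Γ v i'))) ∧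
    (∀ y' : V → Option (Fin D → A), Relation.ReflTransGen (EraseStep Γ) y₀ y' →
      K ≤ (Finset.univ.filter
        (fun u : V => y' u = some fun i => c (Γ u i))).card ∧
      (1 - δ / 2) * (Fintype.card R) ≤
        ((Finset.univ.filter (fun w : R =>
          ∃ (u : V) (i : Fin D), Γ u i = w ∧ y' u = some fun i' => c (Γ u i'))).card : ℝ)) := by
  refine ⟨fun _ _ _ _ _ _ _ _ _ hΓ hab => ne_graphConcat_or_ne_graphConcat hΓ hab, ?_⟩
  intro y' hy'
  -- the two filters differ only in their `Decidable` instances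
  have he' : #(errors (graphConcat Γ c) y₀) = e := by rw [he, errors]; congr
  have hs' : #(erasures y₀) = s := hs ▸ rfl
  have hK : K + (2 * e + s) < Fintype.card V := by
    exact_mod_cast (by linarith : (K + (2 * e + s) : ℝ) < Fintype.card V)
  have hpot := potential_le_of_reflTransGen (c := c) hy'
  have hagree : K ≤ #(agreements (graphConcat Γ c) y') := by
    have := card_le_card_agreements_add (graphConcat Γ c) y'
    omega
  refine ⟨hagree, (hG _ hagree).trans ?_⟩
  exact_mod_cast card_le_card (biUnion_image_agreements_subset Γ (graphConcat Γ c) y')
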